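/- Let C be a switching class of tournaments on a finite vertex set V of size r and let n > r. For a tournament on n labelled vertices chosen uniformly at random, the expected number of r-element subsets W of the vertices such that the induced subtournament on W is isomorphic to some member of C equals C(n,r) · (r!/|Aut(C)|) / 2^{C(r−1,2)}. -/

import Mathlib

def IsTournament {V : Type*} (e : V → V → ℤ) : Prop :=
  (∀ x y : V, e y x = - e x y) ∧ ∀ x y : V, x ≠ y → e x y = 1 ∨ e x y = -1

def gT {V : Type*} (e : V → V → ℤ) : V → V → V → ℤ :=
  fun x y z => e x y * e y z * e z x

open scoped Classical in
noncomputable def switchT {V : Type*} (e : V → V → ℤ) (X : Set V) : V → V → ℤ :=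
  fun x y => if x ∈ X ↔ y ∈ X then e x y else - e x y

def SwitchEquiv {V : Type*} (e₁ e₂ : V → V → ℤ) : Prop :=
  ∃ X : Set V, e₂ = switchT e₁ X

def autG {V : Type*} (g : V → V → V → ℤ) : Set (Equiv.Perm V) :=
  {σ | ∀ x y z, g (σ x) (σ y) (σ z) = g x y z}

/-- The tournament on `Fin n` determined by an independent choice of orientation for each
of the `C(n,2)` edges: for `x < y` the edge is directed from `x` to `y` iff `b` is `true`
on the pair `(x,y)`.  As `b` ranges uniformly over all such choices, this is exactly a
uniformly random tournament on `n` labelled vertices. -/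
def tourOf {n : ℕ} (b : {p : Fin n × Fin n // p.1 < p.2} → Bool) : Fin n → Fin n → ℤ :=
  fun x y =>
    if h : x < y then (if b ⟨(x, y), h⟩ then 1 else -1)
    else if h' : y < x then (if b ⟨(y, x), h'⟩ then -1 else 1)
    else 0

/-!
Switching preserves `gT`, and conversely two tournaments with the same `gT` are switching
equivalent, so a switching class on `r` vertices has `2 ^ (r - 1)` members, and the bijections
carrying a member of the class onto a fixed tournament form a coset of `Aut(C)`. Double counting
pairs (bijection, labelled tournament) shows that `r! * 2 ^ (r - 1) / |Aut(C)|` of the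
`2 ^ C(r, 2)` tournaments on `r` labelled vertices are isomorphic to a member of `C`. Whether an
`r`-set `W` is counted depends only on the `C(r, 2)` edges inside `W`, so each of the `C(n, r)`
sets is counted with that probability, and `C(r, 2) = C(r - 1, 2) + (r - 1)` finishes the count.
-/

open Finset Function

/-- Fixing the values of `f : β → γ` along an injection `ι : α → β` leaves the
remaining `card β - card α` values free. -/
lemma card_pow_mul_card_filter_comp {α β γ : Type*} [Fintype α] [Fintype β] [Fintype γ]
    [DecidableEq α] [DecidableEq β] {ι : α → β} (hι : Injective ι) (P : (α → γ) → Prop)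
    [DecidablePred P] :
    Fintype.card γ ^ Fintype.card α * #{f : β → γ | P (f ∘ ι)} =
      #{g : α → γ | P g} * Fintype.card γ ^ Fintype.card β := by
  classical
  let E : (β → γ) ≃ (α → γ) × ({b // b ∉ Set.range ι} → γ) :=
    (Equiv.piEquivPiSubtypeProd (· ∈ Set.range ι) _).trans
      (Equiv.prodCongr ((Equiv.ofInjective ι hι).symm.arrowCongr (Equiv.refl γ)) (Equiv.refl _))
  have hE : ∀ f, (E f).1 = f ∘ ι := fun f => by ext; simp [E]
  have hcard : #{f : β → γ | P (f ∘ ι)} =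
      #{g : α → γ | P g} * Fintype.card γ ^ (Fintype.card β - Fintype.card α) := by
    rw [← Fintype.card_subtype, ← Fintype.card_subtype,
      Fintype.card_congr (E.subtypeEquiv (p := fun f => P (f ∘ ι)) (q := fun p => P p.1)
        (by simp [hE])),
      Fintype.card_congr Equiv.prodSubtypeFstEquivSubtypeProd, Fintype.card_prod,
      Fintype.card_fun, Fintype.card_subtype_compl, Set.card_range_of_injective hι]
  obtain ⟨k, hk⟩ := Nat.exists_eq_add_of_le (Fintype.card_le_of_injective ι hι)
  rw [hcard, hk, Nat.add_sub_cancel_left, pow_add]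
  ring

lemma choose_two_eq_choose_two_pred_add (r : ℕ) : r.choose 2 = (r - 1).choose 2 + (r - 1) := by
  cases r with
  | zero => rfl
  | succ s => simp [Nat.choose_succ_succ, add_comm]

section Switching

variable {V : Type*}

open scoped Classical in
noncomputable def switchSign (X : Set V) (v : V) : ℤ := if v ∈ X then -1 else 1

lemma switchSign_mul_self (X : Set V) (v : V) : switchSign X v * switchSign X v = 1 := by
  unfold switchSign; split_ifs <;> norm_num

lemma switchT_apply (e : V → V → ℤ) (X : Set V) (x y : V) :
    switchT e X x y = switchSign X x * switchSign X y * e x y := by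
  unfold switchT switchSign; split_ifs <;> simp_all

lemma switchT_compl (e : V → V → ℤ) (X : Set V) : switchT e Xᶜ = switchT e X := by
  funext x y
  by_cases hx : x ∈ X <;> by_cases hy : y ∈ X <;> simp [switchT, hx, hy]

lemma gT_switchT (e : V → V → ℤ) (X : Set V) : gT (switchT e X) = gT e := by
  funext x y z
  unfold gT
  simp only [switchT_apply]
  unfold switchSign; split_ifs <;> ring

namespace IsTournament

variable {e : V → V → ℤ}

lemma apply_self (h : IsTournament e) (x : V) : e x x = 0 := by
  have := h.1 x x; omega

lemma apply_ne_zero (h : IsTournament e) {x y : V} (hxy : x ≠ y) : e x y ≠ 0 := by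
  rcases h.2 x y hxy with h' | h' <;> simp [h']

lemma switchT (h : IsTournament e) (X : Set V) : IsTournament (switchT e X) := by
  refine ⟨fun x y => ?_, fun x y hxy => ?_⟩
  · simp only [switchT_apply, h.1 x y]; ring
  · rcases h.2 x y hxy with h' | h' <;> unfold _root_.switchT <;> split_ifs <;> simp [h']

lemma onFun {W : Type*} (h : IsTournament e) {f : W → V} (hf : Injective f) :
    IsTournament (e on f) :=
  ⟨fun _ _ => h.1 _ _, fun _ _ hxy => h.2 _ _ (hf.ne hxy)⟩

end IsTournament

lemma IsTournament.of_switchEquiv {e₁ e : V → V → ℤ} (h₁ : IsTournament e₁)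
    (h : SwitchEquiv e₁ e) : IsTournament e := by
  obtain ⟨X, rfl⟩ := h; exact h₁.switchT X

lemma gT_eq_of_switchEquiv {e₁ e : V → V → ℤ} (h : SwitchEquiv e₁ e) : gT e = gT e₁ := by
  obtain ⟨X, rfl⟩ := h; exact gT_switchT e₁ X

/-- Switch at the set of vertices whose edge to a base vertex `v₀` disagrees; `gT` then forces
agreement on every other edge. -/
lemma switchEquiv_of_gT_eq {e₁ e₂ : V → V → ℤ} (h₁ : IsTournament e₁) (h₂ : IsTournament e₂)
    (hg : gT e₂ = gT e₁) : SwitchEquiv e₁ e₂ := by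
  cases isEmpty_or_nonempty V with
  | inl _ => exact ⟨∅, funext fun x => isEmptyElim x⟩
  | inr hV =>
    obtain ⟨v₀⟩ := hV
    set X : Set V := {v | e₂ v v₀ ≠ e₁ v v₀}
    have hs₀ : switchSign X v₀ = 1 := by simp [switchSign, X, h₁.apply_self, h₂.apply_self]
    have hbase : ∀ v, e₂ v v₀ = switchSign X v * e₁ v v₀ := by
      intro v
      by_cases hv : v = v₀
      · subst hv; rw [h₁.apply_self, h₂.apply_self, mul_zero]
      by_cases hvX : v ∈ X
      · rcases h₁.2 v v₀ hv with h | h <;> rcases h₂.2 v v₀ hv with h' | h' <;>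
          simp_all [switchSign, X]
      · simp_all [switchSign, X]
    refine ⟨X, funext₂ fun x y => ?_⟩
    rw [switchT_apply]
    by_cases hx : x = v₀
    · rw [hx, h₂.1, hbase, h₁.1 y, hs₀]; ring
    by_cases hy : y = v₀
    · rw [hy, hbase, hs₀]; ring
    by_cases hxy : x = y
    · rw [hxy, h₁.apply_self, h₂.apply_self, mul_zero]
    have htri := congrFun₃ hg x y v₀
    simp only [gT] at htri
    rw [hbase, h₂.1 x v₀, hbase, h₁.1 x v₀] at htri
    have hcancel : e₂ x y * (switchSign X x * switchSign X y) = e₁ x y :=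
      mul_right_cancel₀ (mul_ne_zero (h₁.apply_ne_zero hy) (h₁.apply_ne_zero hx))
        (by linear_combination -htri)
    linear_combination (switchSign X x * switchSign X y) * hcancel
      - e₂ x y * switchSign_mul_self X x - e₂ x y * switchSign X x ^ 2 * switchSign_mul_self X y

lemma switchEquiv_iff_gT_eq {e₁ e : V → V → ℤ} (h₁ : IsTournament e₁) (he : IsTournament e) :
    SwitchEquiv e₁ e ↔ gT e = gT e₁ :=
  ⟨gT_eq_of_switchEquiv, switchEquiv_of_gT_eq h₁ he⟩

end Switching

section SwitchingClass

variable {V : Type*} {e₁ : V → V → ℤ}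

lemma switchT_injOn (h₁ : IsTournament e₁) (v₀ : V) : Set.InjOn (switchT e₁) (𝒫 {v₀}ᶜ) := by
  intro X hX Y hY hXY
  rw [Set.mem_powerset_iff, Set.subset_compl_singleton_iff] at hX hY
  ext v
  by_cases hv : v = v₀
  · subst hv; simp [hX, hY]
  have hsign : switchSign X v = switchSign Y v :=
    mul_right_cancel₀ (h₁.apply_ne_zero hv)
      (by simpa [switchT_apply, switchSign, hX, hY] using congrFun₂ hXY v v₀)
  by_cases hvX : v ∈ X <;> by_cases hvY : v ∈ Y <;> simp_all [switchSign]

/-- Each switching class is hit exactly by the switches at sets avoiding a fixed vertex,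
since `X` and `Xᶜ` give the same tournament. -/
lemma ncard_setOf_switchEquiv [Fintype V] (h₁ : IsTournament e₁) :
    {e | SwitchEquiv e₁ e}.ncard = 2 ^ (Fintype.card V - 1) := by
  cases isEmpty_or_nonempty V with
  | inl _ =>
    rw [Fintype.card_eq_zero, Nat.zero_sub, pow_zero, Set.ncard_eq_one]
    exact ⟨e₁, Set.eq_singleton_iff_unique_mem.2
      ⟨⟨∅, funext isEmptyElim⟩, fun _ _ => funext isEmptyElim⟩⟩
  | inr hV =>
    obtain ⟨v₀⟩ := hV
    have himage : {e | SwitchEquiv e₁ e} = switchT e₁ '' 𝒫 {v₀}ᶜ := by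
      ext e
      constructor
      · rintro ⟨X, rfl⟩
        by_cases hv : v₀ ∈ X
        · exact ⟨Xᶜ, by simpa using hv, switchT_compl e₁ X⟩
        · exact ⟨X, by simpa using hv, rfl⟩
      · rintro ⟨X, -, rfl⟩
        exact ⟨X, rfl⟩
    rw [himage, (switchT_injOn h₁ v₀).ncard_image, Set.ncard_powerset,
      Set.ncard_compl, Set.ncard_singleton, Nat.card_eq_fintype_card]

lemma switchEquiv_onFun_iff_mem_autG {E : V → V → ℤ} (h₁ : IsTournament e₁)
    (hE : SwitchEquiv e₁ E) (τ : Equiv.Perm V) :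
    SwitchEquiv e₁ (E on τ) ↔ τ ∈ autG (gT e₁) := by
  rw [switchEquiv_iff_gT_eq h₁ ((h₁.of_switchEquiv hE).onFun τ.injective),
    ← gT_eq_of_switchEquiv hE]
  exact ⟨fun h x y z => congrFun₃ h x y z, fun h => funext₃ h⟩

/-- The bijections `σ` putting a member of the switching class on `T` form a coset of `Aut`. -/
lemma ncard_setOf_switchEquiv_onFun {α : Type*} (h₁ : IsTournament e₁) {T : α → α → ℤ}
    {σ₀ : V ≃ α} (h₀ : SwitchEquiv e₁ (T on σ₀)) :
    {σ : V ≃ α | SwitchEquiv e₁ (T on σ)}.ncard = (autG (gT e₁)).ncard := by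
  have hcoset : {σ : V ≃ α | SwitchEquiv e₁ (T on σ)} =
      (Equiv.equivCongr (Equiv.refl V) σ₀) '' autG (gT e₁) := by
    ext σ
    constructor
    · intro (hσ : SwitchEquiv e₁ (T on σ))
      refine ⟨σ.trans σ₀.symm, (switchEquiv_onFun_iff_mem_autG h₁ h₀ _).1 ?_, by ext; simp⟩
      convert hσ using 2
      simp
    · rintro ⟨τ, hτ, rfl⟩
      exact (switchEquiv_onFun_iff_mem_autG h₁ h₀ τ).2 hτ
  rw [hcoset, Set.ncard_image_of_injective _ (Equiv.injective _)]

lemma ncard_autG_pos {V : Type*} [Finite V] (g : V → V → V → ℤ) : 0 < (autG g).ncard :=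
  (Set.ncard_pos (Set.toFinite _)).2 ⟨1, fun _ _ _ => rfl⟩

end SwitchingClass

section Codes

abbrev Edge (m : ℕ) := {p : Fin m × Fin m // p.1 < p.2}

variable {m n : ℕ}

lemma card_edge (m : ℕ) : Fintype.card (Edge m) = m.choose 2 := by
  classical
  rw [Fintype.card_subtype]
  simpa using Fintype.card_product_filter_lt (α := Fin m)

lemma tourOf_injective : Injective (tourOf : (Edge m → Bool) → Fin m → Fin m → ℤ) := by
  intro b c hbc
  funext q
  have hq := congrFun₂ hbc q.1.1 q.1.2
  simp only [tourOf, dif_pos q.2] at hq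
  cases hb : b q <;> cases hc : c q <;> simp_all

lemma exists_tourOf_eq {T : Fin m → Fin m → ℤ} (hT : IsTournament T) : ∃ b, tourOf b = T := by
  refine ⟨fun q => decide (T q.1.1 q.1.2 = 1), funext₂ fun x y => ?_⟩
  unfold tourOf
  rcases lt_trichotomy x y with h | rfl | h
  · rw [dif_pos h]
    rcases hT.2 x y h.ne with hv | hv <;> simp [hv]
  · simp [hT.apply_self]
  · rw [dif_neg (asymm h), dif_pos h, hT.1 y x]
    rcases hT.2 y x h.ne with hv | hv <;> simp [hv]

def Edge.map (f : Fin m ↪o Fin n) (q : Edge m) : Edge n :=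
  ⟨(f q.1.1, f q.1.2), f.strictMono q.2⟩

lemma Edge.map_injective (f : Fin m ↪o Fin n) : Injective (Edge.map f) := by
  rintro ⟨⟨a, b⟩, _⟩ ⟨⟨c, d⟩, _⟩ h
  simp only [Edge.map, Subtype.mk.injEq, Prod.mk.injEq, f.injective.eq_iff] at h
  simp [h]

lemma tourOf_comp_edgeMap (f : Fin m ↪o Fin n) (b : Edge n → Bool) :
    tourOf (b ∘ Edge.map f) = (tourOf b on f) := by
  funext x y
  simp only [tourOf, onFun, comp_apply, Edge.map]
  rcases lt_trichotomy x y with h | rfl | h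
  · rw [dif_pos h, dif_pos (f.strictMono h)]; rfl
  · simp
  · rw [dif_neg (asymm h), dif_pos h, dif_neg (asymm (f.strictMono h)), dif_pos (f.strictMono h)]
    rfl

end Codes

section Counting

variable {V : Type*}

def SwitchingIsomorphic (e₁ : V → V → ℤ) {α : Type*} (T : α → α → ℤ) : Prop :=
  ∃ σ : V ≃ α, SwitchEquiv e₁ (T on σ)

def HasSwitchingCopyOn (e₁ : V → V → ℤ) {α : Type*} (T : α → α → ℤ) (W : Finset α) : Prop :=
  ∃ e : V → V → ℤ, SwitchEquiv e₁ e ∧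
    ∃ φ : V → α, Injective φ ∧ (∀ v, φ v ∈ W) ∧ ∀ x y, T (φ x) (φ y) = e x y

variable [Fintype V] {e₁ : V → V → ℤ}

open scoped Classical

lemma hasSwitchingCopyOn_iff {α : Type*} [LinearOrder α] {T : α → α → ℤ} {W : Finset α}
    (hW : W.card = Fintype.card V) :
    HasSwitchingCopyOn e₁ T W ↔ SwitchingIsomorphic e₁ (T on W.orderEmbOfFin hW) := by
  constructor
  · rintro ⟨e, he, φ, hφ, hmem, hT⟩
    let φW : V → W := fun v => ⟨φ v, hmem v⟩
    have hbij : Bijective φW := (Fintype.bijective_iff_injective_and_card φW).2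
      ⟨fun x y h => hφ (congrArg Subtype.val h), by simp [hW]⟩
    refine ⟨(Equiv.ofBijective φW hbij).trans (W.orderIsoOfFin hW).symm.toEquiv, ?_⟩
    convert he using 1
    funext x y
    simp [onFun, φW, ← hT, ← Finset.coe_orderIsoOfFin_apply]
  · rintro ⟨σ, hσ⟩
    exact ⟨_, hσ, W.orderEmbOfFin hW ∘ σ, (W.orderEmbOfFin hW).injective.comp σ.injective,
      fun v => W.orderEmbOfFin_mem hW _, fun _ _ => rfl⟩

lemma ncard_setOf_switchEquiv_tourOf_onFun {m : ℕ} (h₁ : IsTournament e₁) (σ : V ≃ Fin m) :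
    {c : Edge m → Bool | SwitchEquiv e₁ (tourOf c on σ)}.ncard = 2 ^ (Fintype.card V - 1) := by
  have hinj : Injective fun c : Edge m → Bool => tourOf c on σ := fun c c' h =>
    tourOf_injective (funext₂ fun i j => by simpa [onFun] using congrFun₂ h (σ.symm i) (σ.symm j))
  have himage : (fun c : Edge m → Bool => tourOf c on σ) ''
      {c | SwitchEquiv e₁ (tourOf c on σ)} = {e | SwitchEquiv e₁ e} := by
    ext e
    constructor
    · rintro ⟨c, hc, rfl⟩
      exact hc
    · intro he
      obtain ⟨c, hc⟩ := exists_tourOf_eq ((h₁.of_switchEquiv he).onFun σ.symm.injective)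
      have hce : (tourOf c on σ) = e := by rw [hc]; funext x y; simp [onFun]
      exact ⟨c, by rwa [Set.mem_ofPred_eq, hce], hce⟩
  rw [← ncard_setOf_switchEquiv h₁, ← himage, Set.ncard_image_of_injective _ hinj]

/-- Double count the pairs `(σ, c)` with `tourOf c on σ` in the switching class: each `σ` admits
`2 ^ (r - 1)` codes `c`, and each code admitting some `σ` admits `|Aut|` of them. -/
lemma card_filter_switchingIsomorphic_mul (h₁ : IsTournament e₁) :
    #{c : Edge (Fintype.card V) → Bool | SwitchingIsomorphic e₁ (tourOf c)} *
      (autG (gT e₁)).ncard = (Fintype.card V).factorial * 2 ^ (Fintype.card V - 1) := by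
  set r := Fintype.card V
  let R : (V ≃ Fin r) → (Edge r → Bool) → Prop := fun σ c => SwitchEquiv e₁ (tourOf c on σ)
  have hrow : ∀ σ, #{c | R σ c} = 2 ^ (r - 1) := fun σ => by
    rw [← ncard_setOf_switchEquiv_tourOf_onFun h₁ σ, ← Set.ncard_coe_finset]
    simp [R]
  have hcol : ∀ c, #{σ | R σ c} =
      if SwitchingIsomorphic e₁ (tourOf c) then (autG (gT e₁)).ncard else 0 := fun c => by
    split_ifs with hc
    · obtain ⟨σ₀, h₀⟩ := hc
      rw [← ncard_setOf_switchEquiv_onFun h₁ h₀, ← Set.ncard_coe_finset]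
      simp [R]
    · exact card_eq_zero.2 (filter_eq_empty_iff.2 fun σ _ hσ => hc ⟨σ, hσ⟩)
  have hdouble := sum_card_bipartiteAbove_eq_sum_card_bipartiteBelow
    (s := (univ : Finset (V ≃ Fin r))) (t := (univ : Finset (Edge r → Bool))) (r := R)
  simp only [bipartiteAbove, bipartiteBelow, hrow, hcol, sum_const, card_univ, smul_eq_mul,
    ← sum_filter] at hdouble
  rw [← hdouble, Fintype.card_equiv (Fintype.equivFin V)]

lemma card_filter_switchingIsomorphic_div (h₁ : IsTournament e₁) :
    (#{c : Edge (Fintype.card V) → Bool | SwitchingIsomorphic e₁ (tourOf c)} : ℚ) /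
        2 ^ (Fintype.card V).choose 2 =
      (Fintype.card V).factorial / (autG (gT e₁)).ncard / 2 ^ (Fintype.card V - 1).choose 2 := by
  have hA : ((autG (gT e₁)).ncard : ℚ) ≠ 0 := by exact_mod_cast (ncard_autG_pos _).ne'
  have hcount := congrArg (Nat.cast (R := ℚ)) (card_filter_switchingIsomorphic_mul h₁)
  push_cast at hcount
  rw [choose_two_eq_choose_two_pred_add, pow_add]
  field_simp
  linear_combination hcount

lemma two_pow_mul_card_filter_hasSwitchingCopyOn {n : ℕ} {W : Finset (Fin n)}
    (hW : W.card = Fintype.card V) :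
    2 ^ (Fintype.card V).choose 2 * #{b : Edge n → Bool | HasSwitchingCopyOn e₁ (tourOf b) W} =
      #{c : Edge (Fintype.card V) → Bool | SwitchingIsomorphic e₁ (tourOf c)} *
        2 ^ n.choose 2 := by
  have hrestrict : ∀ b : Edge n → Bool, HasSwitchingCopyOn e₁ (tourOf b) W ↔
      SwitchingIsomorphic e₁ (tourOf (b ∘ Edge.map (W.orderEmbOfFin hW))) := fun b => by
    rw [tourOf_comp_edgeMap, hasSwitchingCopyOn_iff hW]
  simp_rw [hrestrict]
  simpa [card_edge] using card_pow_mul_card_filter_comp (γ := Bool)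
    (Edge.map_injective (W.orderEmbOfFin hW)) (fun c => SwitchingIsomorphic e₁ (tourOf c))

lemma sum_ncard_setOf_eq_sum_card_filter (n : ℕ) :
    ∑ b : Edge n → Bool, {W : Finset (Fin n) | W.card = Fintype.card V ∧
        HasSwitchingCopyOn e₁ (tourOf b) W}.ncard =
      ∑ W ∈ powersetCard (Fintype.card V) univ,
        #{b : Edge n → Bool | HasSwitchingCopyOn e₁ (tourOf b) W} := by
  refine (sum_congr rfl fun b _ => ?_).trans (sum_card_bipartiteAbove_eq_sum_card_bipartiteBelow
    (r := fun b W => HasSwitchingCopyOn e₁ (tourOf b) W))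
  rw [← Set.ncard_coe_finset]
  congr 1
  ext W
  simp [bipartiteAbove, mem_powersetCard]

end Counting

theorem statement5_general {V : Type*} [Fintype V] (e₁ : V → V → ℤ) (h₁ : IsTournament e₁)
    (n : ℕ) :
    (∑ b : {p : Fin n × Fin n // p.1 < p.2} → Bool,
        ({W : Finset (Fin n) | W.card = Fintype.card V ∧
            ∃ e : V → V → ℤ, SwitchEquiv e₁ e ∧
              ∃ φ : V → Fin n, Function.Injective φ ∧ (∀ v, φ v ∈ W) ∧
                ∀ x y, tourOf b (φ x) (φ y) = e x y}.ncard : ℚ)) /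
        (2 : ℚ) ^ n.choose 2 =
      (n.choose (Fintype.card V) : ℚ) *
        ((Nat.factorial (Fintype.card V) : ℚ) / ((autG (gT e₁)).ncard : ℚ)) /
        (2 : ℚ) ^ (Fintype.card V - 1).choose 2 := by
  classical
  have hsum := congrArg (Nat.cast (R := ℚ)) (sum_ncard_setOf_eq_sum_card_filter (e₁ := e₁) n)
  push_cast at hsum
  change (∑ b : Edge n → Bool, ({W : Finset (Fin n) | W.card = Fintype.card V ∧
    HasSwitchingCopyOn e₁ (tourOf b) W}.ncard : ℚ)) / _ = _
  have hW : ∀ W ∈ powersetCard (Fintype.card V) (univ : Finset (Fin n)),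
      (#{b : Edge n → Bool | HasSwitchingCopyOn e₁ (tourOf b) W} : ℚ) / 2 ^ n.choose 2 =
        #{c : Edge (Fintype.card V) → Bool | SwitchingIsomorphic e₁ (tourOf c)} /
          2 ^ (Fintype.card V).choose 2 := fun W hW => by
    rw [div_eq_div_iff (by positivity) (by positivity), mul_comm]
    exact_mod_cast two_pow_mul_card_filter_hasSwitchingCopyOn (mem_powersetCard.1 hW).2
  rw [hsum, sum_div, sum_congr rfl hW, sum_const, card_powersetCard, card_fin, nsmul_eq_mul,
    card_filter_switchingIsomorphic_div h₁]
  ring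

/-- let `C` be the switching class of a tournament `e₁` on a finite vertex
set `V` of size `r`, and let `n > r`.  The expected number, over a uniformly random
tournament on `n` labelled vertices, of `r`-element vertex subsets `W` whose induced
subtournament is isomorphic to some member of `C`, equals
`C(n,r) · (r! / |Aut(C)|) / 2^(C(r-1,2))`. -/
theorem statement5 {V : Type*} [Fintype V] (e₁ : V → V → ℤ) (h₁ : IsTournament e₁)
    (n : ℕ) (hn : Fintype.card V < n) :
    (∑ b : {p : Fin n × Fin n // p.1 < p.2} → Bool,
        ({W : Finset (Fin n) | W.card = Fintype.card V ∧
            ∃ e : V → V → ℤ, SwitchEquiv e₁ e ∧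
              ∃ φ : V → Fin n, Function.Injective φ ∧ (∀ v, φ v ∈ W) ∧
                ∀ x y, tourOf b (φ x) (φ y) = e x y}.ncard : ℚ)) /
        (2 : ℚ) ^ n.choose 2 =
      (n.choose (Fintype.card V) : ℚ) *
        ((Nat.factorial (Fintype.card V) : ℚ) / ((autG (gT e₁)).ncard : ℚ)) /
        (2 : ℚ) ^ (Fintype.card V - 1).choose 2 :=
  statement5_general e₁ h₁ n
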